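/- The map sending each pair (n,k) with 0 ≤ k ≤ n to the element xⁿyᵏ of M, and each triple (n,k,j) with 0 ≤ n < k and 0 ≤ j ≤ k to the element xⁿyᵏxʲ of M, is a bijection from the disjoint union of these index sets onto M. In particular, every element of M is represented by exactly one word of the form xⁿyᵏ with 0 ≤ k ≤ n or xⁿyᵏxʲ with 0 ≤ n < k and 0 ≤ j ≤ k. -/

import Mathlib

/-- The formal inverse of a word over `{x, y}` (with `x = true`, `y = false`):
reverse the word and interchange the two letters. -/
def winv (w : FreeMonoid Bool) : FreeMonoid Bool :=
  FreeMonoid.ofList ((FreeMonoid.toList w).reverse.map Bool.not)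

/-- The defining relations of the free monogenic inverse monoid. -/
inductive FIMRel1 : FreeMonoid Bool → FreeMonoid Bool → Prop
  | idem (w : FreeMonoid Bool) : FIMRel1 (w * winv w * w) w
  | comm (w z : FreeMonoid Bool) :
      FIMRel1 (w * winv w * (z * winv z)) (z * winv z * (w * winv w))

/-- The free monogenic inverse monoid. -/
abbrev FIM1 := (conGen FIMRel1).Quotient

/-- The generator `x` of the free monogenic inverse monoid. -/
def mx : FIM1 := (conGen FIMRel1).mk' (FreeMonoid.of true)

/-- The (generalized) inverse `y` of the generator. -/
def my : FIM1 := (conGen FIMRel1).mk' (FreeMonoid.of false)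

/-! ### The model -/

structure Md where
  lo : ℤ
  t : ℤ
  hi : ℤ
  hlo : lo ≤ 0
  hhi : 0 ≤ hi
  hlot : lo ≤ t
  hthi : t ≤ hi

lemma Md.ext' {a b : Md} (h1 : a.lo = b.lo) (h2 : a.t = b.t) (h3 : a.hi = b.hi) : a = b := by
  cases a; cases b; simp_all

instance : Mul Md :=
  ⟨fun a b => ⟨min a.lo (a.t + b.lo), a.t + b.t, max a.hi (a.t + b.hi),
    by have := a.hlo; omega, by have := a.hhi; omega,
    by have h1 := a.hlot; have h2 := b.hlot; omega,
    by have h1 := a.hthi; have h2 := b.hthi; omega⟩⟩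

instance : One Md := ⟨⟨0, 0, 0, le_refl _, le_refl _, le_refl _, le_refl _⟩⟩

@[simp] lemma Md.mul_lo (a b : Md) : (a * b).lo = min a.lo (a.t + b.lo) := rfl
@[simp] lemma Md.mul_t (a b : Md) : (a * b).t = a.t + b.t := rfl
@[simp] lemma Md.mul_hi (a b : Md) : (a * b).hi = max a.hi (a.t + b.hi) := rfl
@[simp] lemma Md.one_lo : (1 : Md).lo = 0 := rfl
@[simp] lemma Md.one_t : (1 : Md).t = 0 := rfl
@[simp] lemma Md.one_hi : (1 : Md).hi = 0 := rfl
@[simp] lemma Md.mk_lo (a b c : ℤ) (p q r s) : (Md.mk a b c p q r s).lo = a := rfl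
@[simp] lemma Md.mk_t (a b c : ℤ) (p q r s) : (Md.mk a b c p q r s).t = b := rfl
@[simp] lemma Md.mk_hi (a b c : ℤ) (p q r s) : (Md.mk a b c p q r s).hi = c := rfl

instance : Monoid Md where
  mul_assoc a b c := Md.ext' (by simp; try omega) (by simp; try omega) (by simp; try omega)
  one_mul a := Md.ext' (by simp [a.hlo]) (by simp) (by simp [a.hhi])
  mul_one a := Md.ext' (by simp [a.hlot]) (by simp) (by simp [a.hthi])

def X : Md := ⟨0, 1, 1, le_refl _, by norm_num, by norm_num, le_refl _⟩
def Y : Md := ⟨-1, -1, 0, by norm_num, le_refl _, le_refl _, by norm_num⟩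

def Md.inv' (m : Md) : Md :=
  ⟨m.lo - m.t, -m.t, m.hi - m.t, by have := m.hlot; omega, by have := m.hthi; omega,
   by have := m.hlo; omega, by have := m.hhi; omega⟩

@[simp] lemma Md.inv'_lo (m : Md) : m.inv'.lo = m.lo - m.t := rfl
@[simp] lemma Md.inv'_t (m : Md) : m.inv'.t = -m.t := rfl
@[simp] lemma Md.inv'_hi (m : Md) : m.inv'.hi = m.hi - m.t := rfl

lemma Md.inv'_mul (a b : Md) : (a * b).inv' = b.inv' * a.inv' :=
  Md.ext' (by simp; try omega) (by simp; try omega) (by simp; try omega)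

lemma Md.inv'_one : (1 : Md).inv' = 1 := Md.ext' (by simp) (by simp) (by simp)

lemma Md.mul_inv'_mul (m : Md) : m * m.inv' * m = m :=
  Md.ext' (by simp; try omega) (by simp; try omega) (by simp; try omega)

lemma Md.comm_idem (a b : Md) :
    a * a.inv' * (b * b.inv') = b * b.inv' * (a * a.inv') :=
  Md.ext' (by simp; try omega) (by simp; try omega) (by simp; try omega)

/-! ### The homomorphism -/

def fMd : FreeMonoid Bool →* Md := FreeMonoid.lift (fun b => if b then X else Y)

lemma winv_mul (w z : FreeMonoid Bool) : winv (w * z) = winv z * winv w := by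
  simp [winv, FreeMonoid.toList_mul, ← FreeMonoid.ofList_append]

lemma winv_of (b : Bool) : winv (FreeMonoid.of b) = FreeMonoid.of (!b) := rfl

lemma winv_one : winv 1 = 1 := rfl

lemma fMd_winv (w : FreeMonoid Bool) : fMd (winv w) = (fMd w).inv' := by
  induction w using FreeMonoid.recOn with
  | one => simp [winv_one, Md.inv'_one]
  | of_mul b w ih =>
      rw [winv_mul, map_mul, map_mul, Md.inv'_mul, ih, winv_of]
      congr 1
      cases b <;> simp [fMd, X, Y, Md.inv']

def phi : FIM1 →* Md :=
  Con.lift _ fMd (Con.conGen_le.mpr (fun a b h => by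
    cases h with
    | idem w => show fMd _ = fMd _; rw [map_mul, map_mul, fMd_winv, Md.mul_inv'_mul]
    | comm w z =>
        show fMd _ = fMd _
        simp only [map_mul, fMd_winv]
        exact Md.comm_idem _ _))

lemma phi_mx : phi mx = X := by
  rw [mx, phi, Con.lift_mk']; rfl

lemma phi_my : phi my = Y := by
  rw [my, phi, Con.lift_mk']; rfl

/-! ### Values on normal forms -/

lemma Xpow (n : ℕ) : (X : Md) ^ n = ⟨0, n, n, le_refl _, Int.natCast_nonneg n,
    Int.natCast_nonneg n, le_refl _⟩ := by
  induction n with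
  | zero => exact Md.ext' (by simp) (by simp) (by simp)
  | succ n ih =>
      rw [pow_succ, ih]
      exact Md.ext' (by simp [X]; try omega) (by simp [X]) (by simp [X]; try omega)

lemma Ypow (k : ℕ) : (Y : Md) ^ k = ⟨-k, -k, 0, by omega, le_refl _, le_refl _, by omega⟩ := by
  induction k with
  | zero => exact Md.ext' (by simp) (by simp) (by simp)
  | succ k ih =>
      rw [pow_succ, ih]
      exact Md.ext' (by simp [Y]; try omega) (by simp [Y]; ring) (by simp [Y]; try omega)

lemma phi_nf1 (n k : ℕ) (h : k ≤ n) :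
    phi (mx ^ n * my ^ k) = ⟨0, (n : ℤ) - k, n, le_refl _, Int.natCast_nonneg n,
      by omega, by omega⟩ := by
  rw [map_mul, map_pow, map_pow, phi_mx, phi_my, Xpow, Ypow]
  exact Md.ext' (by simp; try omega) (by simp; ring) (by simp; try omega)

lemma phi_nf2 (n k j : ℕ) (hn : n < k) (hj : j ≤ k) :
    phi (mx ^ n * my ^ k * mx ^ j) = ⟨(n : ℤ) - k, (n : ℤ) - k + j, n,
      by omega, Int.natCast_nonneg n, by omega, by omega⟩ := by
  rw [map_mul, map_mul, map_pow, map_pow, map_pow, phi_mx, phi_my, Xpow n, Ypow, Xpow j]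
  exact Md.ext' (by simp; try omega) (by simp; ring) (by simp; try omega)

/-! ### Relations in FIM1 -/

lemma rel_eq {a b : FreeMonoid Bool} (h : FIMRel1 a b) :
    (conGen FIMRel1).mk' a = (conGen FIMRel1).mk' b :=
  (Con.eq _).mpr (ConGen.Rel.of _ _ h)

lemma winv_pow_true (m : ℕ) : winv ((FreeMonoid.of true) ^ m) = (FreeMonoid.of false) ^ m := by
  induction m with
  | zero => simp [winv_one]
  | succ m ih =>
      rw [pow_succ, winv_mul, ih, winv_of]
      simp [← pow_succ']

lemma winv_pow_false (m : ℕ) : winv ((FreeMonoid.of false) ^ m) = (FreeMonoid.of true) ^ m := by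
  induction m with
  | zero => simp [winv_one]
  | succ m ih =>
      rw [pow_succ, winv_mul, ih, winv_of]
      simp [← pow_succ']

lemma midem_x (m : ℕ) : mx ^ m * my ^ m * mx ^ m = mx ^ m := by
  have h := rel_eq (FIMRel1.idem ((FreeMonoid.of true) ^ m))
  rw [winv_pow_true] at h
  simpa [map_mul, map_pow, mx, my] using h

lemma midem_y (m : ℕ) : my ^ m * mx ^ m * my ^ m = my ^ m := by
  have h := rel_eq (FIMRel1.idem ((FreeMonoid.of false) ^ m))
  rw [winv_pow_false] at h
  simpa [map_mul, map_pow, mx, my] using h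

lemma mcomm (a b : ℕ) :
    (mx ^ a * my ^ a) * (my ^ b * mx ^ b) = (my ^ b * mx ^ b) * (mx ^ a * my ^ a) := by
  have h := rel_eq (FIMRel1.comm ((FreeMonoid.of true) ^ a) ((FreeMonoid.of false) ^ b))
  rw [winv_pow_true, winv_pow_false] at h
  simpa [map_mul, map_pow, mx, my] using h

lemma mxyx : mx * my * mx = mx := by simpa using midem_x 1

lemma myxy : my * mx * my = my := by simpa using midem_y 1

/-! ### Derived identities -/

lemma xF_absorb {m a : ℕ} (h : m ≤ a) : mx ^ a * (my ^ m * mx ^ m) = mx ^ a := by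
  conv_lhs => rw [show a = (a - m) + m from (Nat.sub_add_cancel h).symm]
  rw [pow_add, mul_assoc, ← mul_assoc (mx ^ m), midem_x,
    ← pow_add, Nat.sub_add_cancel h]

lemma yE_absorb {m c : ℕ} (h : m ≤ c) : my ^ c * (mx ^ m * my ^ m) = my ^ c := by
  conv_lhs => rw [show c = (c - m) + m from (Nat.sub_add_cancel h).symm]
  rw [pow_add, mul_assoc, ← mul_assoc (my ^ m), midem_y,
    ← pow_add, Nat.sub_add_cancel h]

lemma Fx (c : ℕ) : mx * (my ^ (c + 1) * mx ^ (c + 1)) = (my ^ c * mx ^ c) * mx := by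
  calc mx * (my ^ (c + 1) * mx ^ (c + 1))
      = ((mx ^ 1 * my ^ 1) * (my ^ c * mx ^ c)) * mx := by
        rw [pow_succ' my, pow_succ mx]; simp only [pow_one, mul_assoc]
    _ = ((my ^ c * mx ^ c) * (mx ^ 1 * my ^ 1)) * mx := by rw [mcomm]
    _ = (my ^ c * mx ^ c) * (mx * my * mx) := by simp only [pow_one, mul_assoc]
    _ = (my ^ c * mx ^ c) * mx := by rw [mxyx]

/-! ### Closure of normal forms -/

def InNF (z : FIM1) : Prop :=
  (∃ n k, k ≤ n ∧ z = mx ^ n * my ^ k) ∨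
  (∃ n k j, n < k ∧ j ≤ k ∧ z = mx ^ n * my ^ k * mx ^ j)

lemma InNF_one : InNF 1 := Or.inl ⟨0, 0, le_refl 0, by simp⟩

lemma nf1_mul_x {n k : ℕ} (hk : k + 1 ≤ n) :
    mx ^ n * my ^ (k + 1) * mx = mx ^ n * my ^ k := by
  have hkn : k ≤ n := by omega
  calc mx ^ n * my ^ (k + 1) * mx
      = mx ^ (n - k) * ((mx ^ k * my ^ k) * (my ^ 1 * mx ^ 1)) := by
        conv_lhs => rw [show n = (n - k) + k from (Nat.sub_add_cancel hkn).symm]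
        rw [pow_add, pow_succ my]
        simp only [pow_one, mul_assoc]
    _ = mx ^ (n - k) * ((my ^ 1 * mx ^ 1) * (mx ^ k * my ^ k)) := by rw [mcomm]
    _ = (mx ^ (n - k) * (my ^ 1 * mx ^ 1)) * (mx ^ k * my ^ k) := by
        simp only [mul_assoc]
    _ = mx ^ (n - k) * (mx ^ k * my ^ k) := by rw [xF_absorb (by omega : 1 ≤ n - k)]
    _ = mx ^ n * my ^ k := by rw [← mul_assoc, ← pow_add, Nat.sub_add_cancel hkn]

lemma nf2_mul_x {n k : ℕ} :
    mx ^ n * my ^ k * mx ^ k * mx = mx ^ (n + 1) * my ^ (k + 1) * mx ^ (k + 1) := by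
  calc mx ^ n * my ^ k * mx ^ k * mx
      = mx ^ n * (mx * (my ^ (k + 1) * mx ^ (k + 1))) := by
        rw [Fx]; simp only [mul_assoc]
    _ = mx ^ (n + 1) * my ^ (k + 1) * mx ^ (k + 1) := by
        rw [pow_succ mx n]; simp only [mul_assoc]

lemma nf2_mul_y {n k j : ℕ} (hj : j + 1 ≤ k) :
    mx ^ n * my ^ k * mx ^ (j + 1) * my = mx ^ n * my ^ k * mx ^ j := by
  have hjk : j ≤ k := by omega
  calc mx ^ n * my ^ k * mx ^ (j + 1) * my
      = mx ^ n * (my ^ (k - j) * ((my ^ j * mx ^ j) * (mx ^ 1 * my ^ 1))) := by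
        conv_lhs => rw [show k = (k - j) + j from (Nat.sub_add_cancel hjk).symm]
        rw [pow_add, pow_succ mx]
        simp only [pow_one, mul_assoc]
    _ = mx ^ n * (my ^ (k - j) * ((mx ^ 1 * my ^ 1) * (my ^ j * mx ^ j))) := by rw [← mcomm]
    _ = mx ^ n * ((my ^ (k - j) * (mx ^ 1 * my ^ 1)) * (my ^ j * mx ^ j)) := by
        simp only [mul_assoc]
    _ = mx ^ n * (my ^ (k - j) * (my ^ j * mx ^ j)) := by
        rw [yE_absorb (by omega : 1 ≤ k - j)]
    _ = mx ^ n * my ^ k * mx ^ j := by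
        conv_rhs => rw [show k = (k - j) + j from (Nat.sub_add_cancel hjk).symm]
        rw [pow_add]
        simp only [mul_assoc]

lemma InNF_mul_x {z : FIM1} (h : InNF z) : InNF (z * mx) := by
  rcases h with ⟨n, k, hk, rfl⟩ | ⟨n, k, j, hn, hj, rfl⟩
  · rcases Nat.eq_zero_or_pos k with rfl | hk0
    · exact Or.inl ⟨n + 1, 0, Nat.zero_le _, by
        simp only [pow_zero, mul_one, pow_succ]⟩
    · obtain ⟨k', rfl⟩ : ∃ k', k = k' + 1 := ⟨k - 1, by omega⟩
      exact Or.inl ⟨n, k', by omega, nf1_mul_x hk⟩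
  · rcases Nat.lt_or_ge j k with hjk | hjk
    · exact Or.inr ⟨n, k, j + 1, hn, hjk, by rw [pow_succ mx j]; simp only [mul_assoc]⟩
    · have hjk' : j = k := le_antisymm hj hjk
      subst hjk'
      exact Or.inr ⟨n + 1, j + 1, j + 1, by omega, le_refl _, nf2_mul_x⟩

lemma InNF_mul_y {z : FIM1} (h : InNF z) : InNF (z * my) := by
  rcases h with ⟨n, k, hk, rfl⟩ | ⟨n, k, j, hn, hj, rfl⟩
  · rcases Nat.lt_or_ge k n with hkn | hkn
    · exact Or.inl ⟨n, k + 1, hkn, by rw [pow_succ my k]; simp only [mul_assoc]⟩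
    · have : k = n := le_antisymm hk hkn
      subst this
      exact Or.inr ⟨k, k + 1, 0, by omega, Nat.zero_le _, by
        rw [pow_succ my k]; simp only [pow_zero, mul_one, mul_assoc]⟩
  · rcases Nat.eq_zero_or_pos j with rfl | hj0
    · exact Or.inr ⟨n, k + 1, 0, by omega, Nat.zero_le _, by
        rw [pow_succ my k]; simp only [pow_zero, mul_one, mul_assoc]⟩
    · obtain ⟨j', rfl⟩ : ∃ j', j = j' + 1 := ⟨j - 1, by omega⟩
      exact Or.inr ⟨n, k, j', by omega, by omega, nf2_mul_y hj⟩

lemma InNF_all (z : FIM1) : InNF z := by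
  obtain ⟨w, rfl⟩ := Con.mk'_surjective z
  rw [← FreeMonoid.ofList_toList w]
  generalize FreeMonoid.toList w = l
  induction l using List.reverseRecOn with
  | nil => exact InNF_one
  | append_singleton l b ih =>
      rw [FreeMonoid.ofList_append, map_mul]
      cases b
      · exact InNF_mul_y ih
      · exact InNF_mul_x ih


/-- Every element of the free monogenic inverse monoid is represented by exactly
one word of the form `xⁿyᵏ` with `0 ≤ k ≤ n` or `xⁿyᵏxʲ` with `0 ≤ n < k`, `0 ≤ j ≤ k`. -/
theorem normal_forms_bijective :
    Function.Bijective
      (fun p : {p : ℕ × ℕ // p.2 ≤ p.1} ⊕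
          {t : ℕ × ℕ × ℕ // t.1 < t.2.1 ∧ t.2.2 ≤ t.2.1} =>
        match p with
        | .inl ⟨(n, k), _⟩ => mx ^ n * my ^ k
        | .inr ⟨(n, k, j), _⟩ => mx ^ n * my ^ k * mx ^ j) := by
  constructor
  · rintro (⟨⟨n, k⟩, hk⟩ | ⟨⟨n, k, j⟩, hn, hj⟩) (⟨⟨n', k'⟩, hk'⟩ | ⟨⟨n', k', j'⟩, hn', hj'⟩) h <;>
      dsimp only at h <;> have H := congrArg phi h
    · rw [phi_nf1 n k hk, phi_nf1 n' k' hk'] at H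
      have h1 := congrArg Md.t H
      have h2 := congrArg Md.hi H
      simp only [Md.mk_t, Md.mk_hi] at h1 h2
      have hn2 : n = n' := by omega
      have hk2 : k = k' := by omega
      subst hn2; subst hk2; rfl
    · rw [phi_nf1 n k hk, phi_nf2 n' k' j' hn' hj'] at H
      have h1 := congrArg Md.lo H
      simp only [Md.mk_lo] at h1
      exfalso; dsimp only at hn' hj'; omega
    · rw [phi_nf2 n k j hn hj, phi_nf1 n' k' hk'] at H
      have h1 := congrArg Md.lo H
      simp only [Md.mk_lo] at h1
      exfalso; dsimp only at hn hj; omega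
    · rw [phi_nf2 n k j hn hj, phi_nf2 n' k' j' hn' hj'] at H
      have h1 := congrArg Md.lo H
      have h2 := congrArg Md.t H
      have h3 := congrArg Md.hi H
      simp only [Md.mk_lo, Md.mk_t, Md.mk_hi] at h1 h2 h3
      have hn2 : n = n' := by omega
      have hk2 : k = k' := by omega
      have hj2 : j = j' := by omega
      subst hn2; subst hk2; subst hj2; rfl
  · intro z
    rcases InNF_all z with ⟨n, k, hk, rfl⟩ | ⟨n, k, j, hn, hj, rfl⟩
    · exact ⟨.inl ⟨(n, k), hk⟩, rfl⟩
    · exact ⟨.inr ⟨(n, k, j), hn, hj⟩, rfl⟩
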